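/- Let α, β ∈ IEnd(P_n) and let I₁,…,I_k and I′₁,…,I′_l be the maximal intervals of Dom α and Dom β respectively. Then α L β in IEnd(P_n) if and only if {α(I₁),…,α(I_k)} = {β(I′₁),…,β(I′_l)} as sets of subsets of {1,…,n}. -/

import Mathlib

open scoped Classical

/-- `adj u v` means `|u - v| = 1`, i.e. `u` and `v` are adjacent in the path. -/
def adj (u v : ℕ) : Prop := u + 1 = v ∨ v + 1 = u

/-- `f` is an injective partial endomorphism of the path `P_n` on `{1,…,n}`. -/
structure IsIEnd (n : ℕ) (f : ℕ →. ℕ) : Prop where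
  dom_subset : f.Dom ⊆ Set.Icc 1 n
  ran_subset : f.ran ⊆ Set.Icc 1 n
  inj : ∀ ⦃x y a : ℕ⦄, a ∈ f x → a ∈ f y → x = y
  edge : ∀ ⦃u v a b : ℕ⦄, a ∈ f u → b ∈ f v → adj u v → adj a b

/-- `f` is a partial automorphism of the path `P_n`. -/
def IsPAut (n : ℕ) (f : ℕ →. ℕ) : Prop :=
  IsIEnd n f ∧ ∀ ⦃u v a b : ℕ⦄, a ∈ f u → b ∈ f v → adj a b → adj u v

/-- Left-to-right composition of partial maps: `x (pcomp f g) = (x f) g`. -/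
def pcomp (f g : ℕ →. ℕ) : ℕ →. ℕ := PFun.comp g f

/-- The inverse of an injective partial map. -/
noncomputable def pinv (f : ℕ →. ℕ) : ℕ →. ℕ :=
  fun y => ⟨∃ x, y ∈ f x, fun h => h.choose⟩

/-- `I` is an interval of `X`: a set of consecutive integers contained in `X`. -/
def IsIntervalOf (I X : Set ℕ) : Prop :=
  I ⊆ X ∧ ∀ ⦃x⦄, x ∈ I → ∀ ⦃y⦄, y ∈ I → ∀ ⦃z : ℕ⦄, x < z → z < y → z ∈ I

/-- `I` is a maximal interval of `X`. -/
def IsMaxIntervalOf (I X : Set ℕ) : Prop :=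
  IsIntervalOf I X ∧ ∀ J, IsIntervalOf J X → I ⊆ J → I = J

/-!
On an interval of its domain, an injective edge-preserving partial map of the path is a
translation or a reflection. Hence it maps intervals onto intervals and reflects adjacency there.

If `α = γβ` and `β = δα`, then `γ` carries a maximal interval `I` of `Dom α` onto an interval of
`Dom β`, which lies in a maximal interval `J`, so `α(I) ⊆ β(J)`; likewise `β(J) ⊆ α(I')` for a
maximal interval `I'` of `Dom α`. Injectivity of `α` gives `I ⊆ I'`, and maximality gives `I = I'`.
Conversely, if the images agree, `γ = αβ⁻¹` is in `IEnd(P_n)`: adjacent points `u, v` lie in one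
maximal interval `I`, `α(I) = β(J)`, and `β` reflects adjacency on `J`.
-/

open Set

lemma mem_pcomp {f g : ℕ →. ℕ} {x a : ℕ} : a ∈ pcomp f g x ↔ ∃ c ∈ f x, a ∈ g c :=
  Part.mem_bind_iff

lemma mem_dom_pcomp {f g : ℕ →. ℕ} {x : ℕ} : x ∈ (pcomp f g).Dom ↔ ∃ c ∈ f x, c ∈ g.Dom := by
  simp only [PFun.mem_dom, mem_pcomp]
  tauto

lemma mem_pinv_iff {f : ℕ →. ℕ} (hf : ∀ ⦃x y a : ℕ⦄, a ∈ f x → a ∈ f y → x = y) {a c : ℕ} :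
    c ∈ pinv f a ↔ a ∈ f c := by
  constructor
  · rintro ⟨h, rfl⟩
    exact h.choose_spec
  · intro h
    have hex : ∃ x, a ∈ f x := ⟨c, h⟩
    exact ⟨hex, hf hex.choose_spec h⟩

lemma mem_of_mem_image {f : ℕ →. ℕ} (hf : ∀ ⦃x y a : ℕ⦄, a ∈ f x → a ∈ f y → x = y)
    {I : Set ℕ} {x a : ℕ} (ha : a ∈ f x) (hI : a ∈ f.image I) : x ∈ I := by
  obtain ⟨y, hy, hya⟩ := (f.mem_image a I).1 hI
  rwa [hf ha hya]

section Intervals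

variable {I X : Set ℕ}

lemma isIntervalOf_iff : IsIntervalOf I X ↔ I ⊆ X ∧ I.OrdConnected := by
  refine and_congr_right fun _ => ⟨fun h => ⟨fun x hx y hy z hz => ?_⟩, fun h x hx y hy z hxz hzy =>
    h.out hx hy ⟨hxz.le, hzy.le⟩⟩
  rcases hz.1.eq_or_lt with rfl | hxz
  · exact hx
  rcases hz.2.eq_or_lt with rfl | hzy
  · exact hy
  exact h hx hy hxz hzy

lemma isMaxIntervalOf_ordConnectedComponent {x : ℕ} (hx : x ∈ X) :
    IsMaxIntervalOf (ordConnectedComponent X x) X := by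
  refine ⟨isIntervalOf_iff.2 ⟨ordConnectedComponent_subset, inferInstance⟩,
    fun J hJ hsub => hsub.antisymm ?_⟩
  have := (isIntervalOf_iff.1 hJ).2
  exact subset_ordConnectedComponent (hsub (self_mem_ordConnectedComponent.2 hx)) hJ.1

lemma IsIntervalOf.exists_isMaxIntervalOf_superset (hI : IsIntervalOf I X) :
    ∃ J, IsMaxIntervalOf J X ∧ I ⊆ J := by
  rcases I.eq_empty_or_nonempty with rfl | ⟨x, hx⟩
  · rcases X.eq_empty_or_nonempty with rfl | ⟨x, hx⟩
    · exact ⟨∅, ⟨hI, fun J hJ _ => (subset_empty_iff.1 hJ.1).symm⟩, subset_rfl⟩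
    · exact ⟨_, isMaxIntervalOf_ordConnectedComponent hx, empty_subset _⟩
  · have := (isIntervalOf_iff.1 hI).2
    exact ⟨_, isMaxIntervalOf_ordConnectedComponent (hI.1 hx),
      subset_ordConnectedComponent hx hI.1⟩

lemma mem_ordConnectedComponent_of_adj {u v : ℕ} (hu : u ∈ X) (hv : v ∈ X) (huv : adj u v) :
    v ∈ ordConnectedComponent X u := by
  refine mem_ordConnectedComponent.2 fun w hw => ?_
  rw [mem_uIcc] at hw
  obtain rfl | rfl : w = u ∨ w = v := by unfold adj at huv; omega
  exacts [hu, hv]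

end Intervals

structure IsInjHom (f : ℕ →. ℕ) : Prop where
  inj : ∀ ⦃x y a : ℕ⦄, a ∈ f x → a ∈ f y → x = y
  edge : ∀ ⦃u v a b : ℕ⦄, a ∈ f u → b ∈ f v → adj u v → adj a b

lemma IsIEnd.isInjHom {n : ℕ} {f : ℕ →. ℕ} (hf : IsIEnd n f) : IsInjHom f :=
  ⟨hf.inj, hf.edge⟩

namespace IsInjHom

variable {f : ℕ →. ℕ} {I : Set ℕ}

theorem exists_sign_eq_add_mul (hf : IsInjHom f) {x a : ℕ} (ha : a ∈ f x) (d : ℕ)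
    (hd : Icc x (x + d) ⊆ f.Dom) :
    ∃ s : ℤ, (s = 1 ∨ s = -1) ∧ ∀ j ≤ d, ∀ c ∈ f (x + j), (c : ℤ) = a + s * j := by
  induction d with
  | zero =>
    refine ⟨1, Or.inl rfl, fun j hj c hc => ?_⟩
    obtain rfl : j = 0 := by omega
    simp [Part.mem_unique hc ha]
  | succ d ih =>
    have value : ∀ j ≤ d + 1, ∃ c, c ∈ f (x + j) := fun j hj =>
      (f.mem_dom _).1 (hd ⟨by omega, by omega⟩)
    obtain ⟨s, hs, H⟩ := ih ((Icc_subset_Icc_right (by omega)).trans hd)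
    obtain ⟨b, hb⟩ := value d d.le_succ
    obtain ⟨c, hc⟩ := value (d + 1) le_rfl
    have hbc := hf.edge hb hc (Or.inl (add_assoc x d 1).symm)
    have hb' := H d le_rfl b hb
    unfold adj at hbc
    rcases Nat.eq_zero_or_pos d with rfl | hd0
    · refine ⟨c - a, by omega, fun j hj c' hc' => ?_⟩
      rcases Nat.le_one_iff_eq_zero_or_eq_one.1 hj with rfl | rfl
      · simp [Part.mem_unique hc' ha]
      · simp [Part.mem_unique hc' hc]
    -- `c` cannot go back to the value at `x + (d - 1)`, by injectivity
    obtain ⟨e, he⟩ := value (d - 1) (by omega)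
    have he' := H (d - 1) (by omega) e he
    have hec : e ≠ c := fun h => by have := hf.inj he (h ▸ hc); omega
    refine ⟨s, hs, fun j hj c' hc' => ?_⟩
    rcases Nat.lt_or_ge j (d + 1) with hj' | hj'
    · exact H j (by omega) c' hc'
    obtain rfl : j = d + 1 := by omega
    rw [Part.mem_unique hc' hc]
    rcases hs with rfl | rfl <;> omega

theorem sub_eq_or_sub_eq (hf : IsInjHom f) (hI : IsIntervalOf I f.Dom) {x y a b : ℕ}
    (hx : x ∈ I) (hy : y ∈ I) (ha : a ∈ f x) (hb : b ∈ f y) :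
    (b : ℤ) - a = y - x ∨ (b : ℤ) - a = x - y := by
  wlog hxy : x ≤ y generalizing x y a b
  · rcases this hy hx hb ha (by omega) with h | h <;> omega
  have hIcc : Icc x (x + (y - x)) ⊆ f.Dom := by
    rw [Nat.add_sub_cancel' hxy]
    exact ((isIntervalOf_iff.1 hI).2.out hx hy).trans hI.1
  obtain ⟨s, hs, H⟩ := hf.exists_sign_eq_add_mul ha (y - x) hIcc
  have := H (y - x) le_rfl b (by rwa [Nat.add_sub_cancel' hxy])
  rcases hs with rfl | rfl <;> omega

theorem ordConnected_image (hf : IsInjHom f) (hI : IsIntervalOf I f.Dom) :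
    (f.image I).OrdConnected := by
  refine ⟨fun c₁ hc₁ c₂ hc₂ z hz => ?_⟩
  obtain ⟨x₁, hx₁, h₁⟩ := (f.mem_image _ _).1 hc₁
  obtain ⟨x₂, hx₂, h₂⟩ := (f.mem_image _ _).1 hc₂
  have h₁₂ := hf.sub_eq_or_sub_eq hI hx₁ hx₂ h₁ h₂
  have hIcc := (isIntervalOf_iff.1 hI).2.out
  rw [mem_Icc] at hz
  obtain ⟨p, hp, hpz⟩ : ∃ p ∈ I, p = x₁ + (z - c₁) ∧ x₁ ≤ x₂ ∨ p + (z - c₁) = x₁ ∧ x₂ ≤ x₁ := by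
    rcases le_total x₁ x₂ with h | h
    · exact ⟨x₁ + (z - c₁), hIcc hx₁ hx₂ ⟨by omega, by omega⟩, Or.inl ⟨rfl, h⟩⟩
    · exact ⟨x₁ - (z - c₁), hIcc hx₂ hx₁ ⟨by omega, by omega⟩, Or.inr ⟨by omega, h⟩⟩
  obtain ⟨c, hc⟩ := (f.mem_dom p).1 (hI.1 hp)
  have h₁p := hf.sub_eq_or_sub_eq hI hx₁ hp h₁ hc
  have hp₂ := hf.sub_eq_or_sub_eq hI hp hx₂ hc h₂
  obtain rfl : c = z := by omega
  exact (f.mem_image _ _).2 ⟨p, hp, hc⟩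

theorem adj_of_adj (hf : IsInjHom f) (hI : IsIntervalOf I f.Dom) {x y a b : ℕ}
    (hx : x ∈ I) (hy : y ∈ I) (ha : a ∈ f x) (hb : b ∈ f y) (hab : adj a b) : adj x y := by
  have := hf.sub_eq_or_sub_eq hI hx hy ha hb
  unfold adj at hab ⊢
  omega

end IsInjHom

/-- The set `{α(I₁), …, α(I_k)}` of the paper. -/
def maxIntervalImages (f : ℕ →. ℕ) : Set (Set ℕ) :=
  {S | ∃ I, IsMaxIntervalOf I f.Dom ∧ S = f.image I}

lemma exists_isMaxIntervalOf_image_subset {α β γ : ℕ →. ℕ} (hγ : IsInjHom γ)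
    (h : α = pcomp γ β) {I : Set ℕ} (hI : IsIntervalOf I α.Dom) :
    ∃ J, IsMaxIntervalOf J β.Dom ∧ α.image I ⊆ β.image J := by
  subst h
  have hIγ : IsIntervalOf I γ.Dom := by
    refine isIntervalOf_iff.2 ⟨fun x hx => ?_, (isIntervalOf_iff.1 hI).2⟩
    obtain ⟨c, hc, -⟩ := mem_dom_pcomp.1 (hI.1 hx)
    exact (γ.mem_dom x).2 ⟨c, hc⟩
  have hK : IsIntervalOf (γ.image I) β.Dom := by
    refine isIntervalOf_iff.2 ⟨fun c hc => ?_, hγ.ordConnected_image hIγ⟩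
    obtain ⟨x, hx, hxc⟩ := (γ.mem_image _ _).1 hc
    obtain ⟨c', hc', hc'β⟩ := mem_dom_pcomp.1 (hI.1 hx)
    rwa [Part.mem_unique hxc hc']
  obtain ⟨J, hJ, hKJ⟩ := hK.exists_isMaxIntervalOf_superset
  refine ⟨J, hJ, fun t ht => ?_⟩
  obtain ⟨x, hx, hxt⟩ := ((pcomp γ β).mem_image _ _).1 ht
  obtain ⟨c, hc, hct⟩ := mem_pcomp.1 hxt
  exact (β.mem_image _ _).2 ⟨c, hKJ ((γ.mem_image _ _).2 ⟨x, hx, hc⟩), hct⟩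

lemma maxIntervalImages_subset_of_eq_pcomp {α β γ δ : ℕ →. ℕ}
    (hα : ∀ ⦃x y a : ℕ⦄, a ∈ α x → a ∈ α y → x = y) (hγ : IsInjHom γ) (hδ : IsInjHom δ)
    (hαβ : α = pcomp γ β) (hβα : β = pcomp δ α) :
    maxIntervalImages α ⊆ maxIntervalImages β := by
  rintro _ ⟨I, hI, rfl⟩
  obtain ⟨J, hJ, hIJ⟩ := exists_isMaxIntervalOf_image_subset hγ hαβ hI.1
  obtain ⟨I', hI', hJI'⟩ := exists_isMaxIntervalOf_image_subset hδ hβα hJ.1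
  have hII' : I ⊆ I' := fun x hx => by
    obtain ⟨a, ha⟩ := (α.mem_dom x).1 (hI.1.1 hx)
    exact mem_of_mem_image hα ha (hJI' (hIJ ((α.mem_image _ _).2 ⟨x, hx, ha⟩)))
  obtain rfl := hI.2 I' hI'.1 hII'
  exact ⟨J, hJ, hIJ.antisymm hJI'⟩

section Construction

variable {n : ℕ} {α β : ℕ →. ℕ}

lemma mem_pcomp_pinv (hβ : ∀ ⦃x y a : ℕ⦄, a ∈ β x → a ∈ β y → x = y) {x c : ℕ} :
    c ∈ pcomp α (pinv β) x ↔ ∃ a ∈ α x, a ∈ β c := by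
  simp only [mem_pcomp, mem_pinv_iff hβ]

lemma isIEnd_pcomp_pinv (hα : IsIEnd n α) (hβ : IsIEnd n β)
    (h : maxIntervalImages α ⊆ maxIntervalImages β) : IsIEnd n (pcomp α (pinv β)) where
  dom_subset x hx := by
    obtain ⟨c, hc⟩ := (PFun.mem_dom _ x).1 hx
    obtain ⟨a, ha, -⟩ := (mem_pcomp_pinv hβ.inj).1 hc
    exact hα.dom_subset ((α.mem_dom x).2 ⟨a, ha⟩)
  ran_subset := by
    rintro c ⟨x, hc⟩
    obtain ⟨a, -, hac⟩ := (mem_pcomp_pinv hβ.inj).1 hc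
    exact hβ.dom_subset ((β.mem_dom c).2 ⟨a, hac⟩)
  inj x y c hx hy := by
    obtain ⟨a, ha, hac⟩ := (mem_pcomp_pinv hβ.inj).1 hx
    obtain ⟨b, hb, hbc⟩ := (mem_pcomp_pinv hβ.inj).1 hy
    rw [Part.mem_unique hac hbc] at ha
    exact hα.inj ha hb
  edge u v c d hc hd huv := by
    obtain ⟨a, ha, hac⟩ := (mem_pcomp_pinv hβ.inj).1 hc
    obtain ⟨b, hb, hbd⟩ := (mem_pcomp_pinv hβ.inj).1 hd
    have hu : u ∈ α.Dom := (α.mem_dom u).2 ⟨a, ha⟩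
    have hv := mem_ordConnectedComponent_of_adj hu ((α.mem_dom v).2 ⟨b, hb⟩) huv
    obtain ⟨J, hJ, hIJ⟩ := h ⟨_, isMaxIntervalOf_ordConnectedComponent hu, rfl⟩
    have hcJ : c ∈ J := mem_of_mem_image hβ.inj hac
      (hIJ ▸ (α.mem_image _ _).2 ⟨u, self_mem_ordConnectedComponent.2 hu, ha⟩)
    have hdJ : d ∈ J := mem_of_mem_image hβ.inj hbd (hIJ ▸ (α.mem_image _ _).2 ⟨v, hv, hb⟩)
    exact hβ.isInjHom.adj_of_adj hJ.1 hcJ hdJ hac hbd (hα.edge ha hb huv)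

lemma eq_pcomp_pcomp_pinv (hβ : ∀ ⦃x y a : ℕ⦄, a ∈ β x → a ∈ β y → x = y)
    (hran : α.ran ⊆ β.ran) : α = pcomp (pcomp α (pinv β)) β := by
  refine PFun.ext fun x t => ⟨fun ht => ?_, fun ht => ?_⟩
  · obtain ⟨c, hc⟩ := hran ⟨x, ht⟩
    exact mem_pcomp.2 ⟨c, (mem_pcomp_pinv hβ).2 ⟨t, ht, hc⟩, hc⟩
  · obtain ⟨c, hc, htc⟩ := mem_pcomp.1 ht
    obtain ⟨a, ha, hac⟩ := (mem_pcomp_pinv hβ).1 hc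
    rwa [← Part.mem_unique hac htc]

lemma ran_subset_ran (h : maxIntervalImages α ⊆ maxIntervalImages β) : α.ran ⊆ β.ran := by
  rintro a ⟨x, ha⟩
  have hx : x ∈ α.Dom := (α.mem_dom x).2 ⟨a, ha⟩
  obtain ⟨J, -, hIJ⟩ := h ⟨_, isMaxIntervalOf_ordConnectedComponent hx, rfl⟩
  obtain ⟨c, -, hc⟩ := (β.mem_image a J).1
    (hIJ ▸ (α.mem_image _ _).2 ⟨x, self_mem_ordConnectedComponent.2 hx, ha⟩)
  exact ⟨c, hc⟩

lemma exists_isIEnd_eq_pcomp (hα : IsIEnd n α) (hβ : IsIEnd n β)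
    (h : maxIntervalImages α ⊆ maxIntervalImages β) : ∃ γ, IsIEnd n γ ∧ α = pcomp γ β :=
  ⟨_, isIEnd_pcomp_pinv hα hβ h, eq_pcomp_pcomp_pinv hβ.inj (ran_subset_ran h)⟩

end Construction

theorem stmt8 (n : ℕ) (α β : ℕ →. ℕ) (hα : IsIEnd n α) (hβ : IsIEnd n β) :
    (∃ γ δ : ℕ →. ℕ, IsIEnd n γ ∧ IsIEnd n δ ∧ α = pcomp γ β ∧ β = pcomp δ α) ↔
    {S : Set ℕ | ∃ I, IsMaxIntervalOf I α.Dom ∧ S = α.image I} =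
      {S : Set ℕ | ∃ I, IsMaxIntervalOf I β.Dom ∧ S = β.image I} := by
  change _ ↔ maxIntervalImages α = maxIntervalImages β
  constructor
  · rintro ⟨γ, δ, hγ, hδ, hαβ, hβα⟩
    exact (maxIntervalImages_subset_of_eq_pcomp hα.inj hγ.isInjHom hδ.isInjHom hαβ hβα).antisymm
      (maxIntervalImages_subset_of_eq_pcomp hβ.inj hδ.isInjHom hγ.isInjHom hβα hαβ)
  · intro h
    obtain ⟨γ, hγ, hαβ⟩ := exists_isIEnd_eq_pcomp hα hβ h.subset
    obtain ⟨δ, hδ, hβα⟩ := exists_isIEnd_eq_pcomp hβ hα h.superset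
    exact ⟨γ, δ, hγ, hδ, hαβ, hβα⟩
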